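/- Denote by $p$ Euler's quintic and let $f : [0, \infty) \to \mathbb{R}$ be the implicit function with $p(r_2, f(r_2)) = 0$ and $f(0) = 1$. Then $f$ is strictly increasing and $f(r_2) > r_2$ for all $r_2 \geq 0$; in particular $f(r_2) > 1$ for $r_2 > 0$. -/

import Mathlib

/-!
On the diagonal `p(r, r) = -(r + 1)⁴ < 0`, so the graph of `f` never meets the diagonal and, since
`f 0 = 1 > 0`, stays above it by the intermediate value theorem. For fixed `y`, `x ↦ p(x, y)` is
strictly decreasing on `[0, y]`; as both `a` and `b` lie in `[0, f a]` when `f a = f b`, this makes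
`f` injective on `[0, ∞)`. A continuous injective function on an interval is strictly monotone,
and `f x > x` rules out the decreasing case.
-/

open Set

/-- Euler's quintic. -/
def eulerP (r2 r3 : ℝ) : ℝ :=
  -r2^5 + 2*r2^4*r3 - 2*r2^4 - r2^3*r3^2 + 4*r2^3*r3 - r2^3 + r2^2*r3^3 - r2^2*r3^2
    + r2^2*r3 - r2^2 - 2*r2*r3^4 - 4*r2*r3^3 - 5*r2*r3^2 - 4*r2*r3 - 2*r2
    + r3^5 + 2*r3^4 + r3^3 - r3^2 - 2*r3 - 1

theorem IsPreconnected.forall_lt_apply_of_lt_apply {α : Type*} [LinearOrder α]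
    [TopologicalSpace α] [OrderClosedTopology α] {s : Set α} (hs : IsPreconnected s)
    {f : α → α} (hf : ContinuousOn f s) {a : α} (ha : a ∈ s) (hfa : a < f a)
    (hne : ∀ x ∈ s, f x ≠ x) : ∀ x ∈ s, x < f x := by
  intro x hx
  by_contra! hfx
  obtain ⟨c, hc, hfc⟩ :=
    hs.intermediate_value₂ hx ha hf continuousOn_id hfx hfa.le
  exact hne c hc hfc

theorem strictMonoOn_Ici_of_injOn {α δ : Type*} [ConditionallyCompleteLinearOrder α]
    [TopologicalSpace α] [OrderTopology α] [DenselyOrdered α] [LinearOrder δ]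
    [TopologicalSpace δ] [OrderClosedTopology δ] {f : α → δ} {a : α}
    (hc : ContinuousOn f (Ici a)) (hi : InjOn f (Ici a)) (hup : ∀ b, ∃ c ≥ b, f a ≤ f c) :
    StrictMonoOn f (Ici a) := by
  intro x hx y hy hxy
  obtain ⟨c, hyc, hfc⟩ := hup y
  have hsub : Icc a c ⊆ Ici a := Icc_subset_Ici_self
  exact ContinuousOn.strictMonoOn_of_injOn_Icc (le_trans hy hyc) hfc (hc.mono hsub)
    (hi.mono hsub) ⟨hx, hxy.le.trans hyc⟩ ⟨hy, hyc⟩ hxy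

theorem eulerP_self (r : ℝ) : eulerP r r = -(r + 1) ^ 4 := by
  unfold eulerP; ring

theorem eulerP_self_ne_zero {r : ℝ} (hr : 0 ≤ r) : eulerP r r ≠ 0 := by
  rw [eulerP_self, neg_ne_zero]
  positivity

def eulerDividedDiff (a b y : ℝ) : ℝ :=
  2 + 4*y + 5*y^2 + 4*y^3 + 2*y^4 + (a+b)*(1-y)*(1+y^2) + (a^2+a*b+b^2)*(y^2-4*y+1)
    + (a^3+a^2*b+a*b^2+b^3)*2*(1-y) + (a^4+a^3*b+a^2*b^2+a*b^3+b^4)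

theorem eulerP_sub_eulerP (a b y : ℝ) :
    eulerP a y - eulerP b y = (b - a) * eulerDividedDiff a b y := by
  unfold eulerP eulerDividedDiff; ring

theorem eulerDividedDiff_pos {a b y : ℝ} (ha : 0 ≤ a) (hb : 0 ≤ b) (hay : a ≤ y) (hby : b ≤ y) :
    0 < eulerDividedDiff a b y := by
  unfold eulerDividedDiff
  nlinarith [mul_nonneg ha hb, sq_nonneg (a-b), sq_nonneg (a+b-2*y), sq_nonneg (y-1),
    mul_nonneg (sub_nonneg.2 hay) (sub_nonneg.2 hby), sq_nonneg (a*b-y*y), sq_nonneg (a-y),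
    sq_nonneg (b-y), mul_nonneg (mul_nonneg ha hb) (mul_nonneg (sub_nonneg.2 hay) (sub_nonneg.2 hby)),
    mul_nonneg ha (sub_nonneg.2 hby), mul_nonneg hb (sub_nonneg.2 hay)]

theorem eulerP_strictAntiOn (y : ℝ) : StrictAntiOn (fun x => eulerP x y) (Icc 0 y) := by
  intro a ⟨ha, hay⟩ b ⟨hb, hby⟩ hab
  have hdiff := eulerP_sub_eulerP a b y
  have := mul_pos (sub_pos.2 hab) (eulerDividedDiff_pos ha hb hay hby)
  show eulerP b y < eulerP a y
  linarith

/-- the implicit function `f` with `p(r2, f r2) = 0` and `f 0 = 1` is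
strictly increasing on `[0, ∞)`, satisfies `f r2 > r2` for `r2 ≥ 0`, and `f r2 > 1`
for `r2 > 0`. -/
theorem euler_implicit_function_monotone (f : ℝ → ℝ)
    (hcont : ContinuousOn f (Ici 0))
    (hroot : ∀ r2 : ℝ, 0 ≤ r2 → eulerP r2 (f r2) = 0)
    (hf0 : f 0 = 1) :
    StrictMonoOn f (Ici 0) ∧
    (∀ r2 : ℝ, 0 ≤ r2 → r2 < f r2) ∧
    (∀ r2 : ℝ, 0 < r2 → 1 < f r2) := by
  have hf0_pos : 0 < f 0 := hf0 ▸ one_pos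
  have hlt : ∀ x ∈ Ici (0 : ℝ), x < f x :=
    isPreconnected_Ici.forall_lt_apply_of_lt_apply hcont self_mem_Ici hf0_pos
      fun x hx hfx => eulerP_self_ne_zero hx (by simpa only [hfx] using hroot x hx)
  have hinj : InjOn f (Ici 0) := fun a ha b hb hab =>
    (eulerP_strictAntiOn (f b)).injOn ⟨ha, hab ▸ (hlt a ha).le⟩ ⟨hb, (hlt b hb).le⟩
      ((hab ▸ hroot a ha).trans (hroot b hb).symm)
  have hmono : StrictMonoOn f (Ici 0) := strictMonoOn_Ici_of_injOn hcont hinj fun b =>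
    ⟨max b (f 0), le_max_left _ _,
      ((le_max_right _ _).trans_lt (hlt _ (le_max_of_le_right hf0_pos.le))).le⟩
  exact ⟨hmono, hlt, fun x hx => hf0 ▸ hmono self_mem_Ici hx.le hx⟩
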